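/- Let p ≥ 1 and φ : ℤ → ℕ → ℝ with φ t j = 0 for all j > p. Suppose there exist q ∈ ℕ and θ : ℤ → ℕ → ℝ with θ t k = 0 for all k > q such that θ is a left inverse of φ, i.e. for all t ∈ ℤ and all i ∈ ℕ, ∑_{j=0}^{min(p,i)} θ t (i−j) · φ (t−i+j) j equals 1 when i = 0 and equals 0 when i ≥ 1. Then for every t ∈ ℤ: φ t 0 ≠ 0 and ∏_{i=0}^{q} φ (t−i) p = 0. -/
import Mathlib


open Finset

/-- Necessary condition of Lemma 1 of the paper for a time-varying lag-polynomial
operator of finite order `p` to admit a left inverse operator of finite order `q`. -/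
theorem stmt_6 (p : ℕ) (hp : 1 ≤ p)
    (φ : ℤ → ℕ → ℝ) (hφp : ∀ (t : ℤ) (j : ℕ), p < j → φ t j = 0)
    (q : ℕ)
    (θ : ℤ → ℕ → ℝ) (hθq : ∀ (t : ℤ) (k : ℕ), q < k → θ t k = 0)
    (hinv : ∀ (t : ℤ) (i : ℕ),
      ∑ j ∈ Finset.range (min p i + 1), θ t (i - j) * φ (t - i + j) j =
        if i = 0 then 1 else 0) :
    ∀ t : ℤ, φ t 0 ≠ 0 ∧ ∏ i ∈ Finset.range (q + 1), φ (t - i) p = 0 := by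
  intro t
  have h0 : θ t 0 * φ t 0 = 1 := by
    have h := hinv t 0
    simp [Nat.min_zero] at h
    linarith [h]
  constructor
  · intro hφ0
    rw [hφ0, mul_zero] at h0
    exact one_ne_zero h0.symm
  · by_contra hprod
    have hne : ∀ k ∈ Finset.range (q + 1), φ (t - (k : ℤ)) p ≠ 0 := by
      intro k hk hzero
      exact hprod (Finset.prod_eq_zero hk hzero)
    -- show θ t k = 0 for all k, by downward induction on q - k
    have key : ∀ n : ℕ, ∀ k : ℕ, q - k = n → θ t k = 0 := by
      intro n
      induction n using Nat.strong_induction_on with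
      | _ n ih =>
        intro k hk
        by_cases hkq : q < k
        · exact hθq t k hkq
        · push_neg at hkq
          have h := hinv t (k + p)
          have hmin : min p (k + p) = p := by omega
          have hip : k + p ≠ 0 := by omega
          rw [hmin, if_neg hip] at h
          -- split off last term j = p
          rw [Finset.sum_range_succ] at h
          have hz : ∀ j ∈ Finset.range p, θ t (k + p - j) * φ (t - (k + p : ℕ) + j) j = 0 := by
            intro j hj
            rw [Finset.mem_range] at hj
            have hθ : θ t (k + p - j) = 0 := by
              by_cases hq : q < k + p - j
              · exact hθq t _ hq
              · exact ih (q - (k + p - j)) (by omega) _ rfl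
            rw [hθ, zero_mul]
          rw [Finset.sum_eq_zero hz, zero_add] at h
          have hsimp : θ t (k + p - p) = θ t k := by congr 1; omega
          have hcast : t - ((k + p : ℕ) : ℤ) + (p : ℤ) = t - (k : ℤ) := by push_cast; ring
          rw [hsimp, hcast] at h
          have := hne k (by simp; omega)
          exact (mul_eq_zero.mp h).resolve_right this
    have hθ0 : θ t 0 = 0 := key (q - 0) 0 rfl
    rw [hθ0, zero_mul] at h0
    exact one_ne_zero h0.symm
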